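/- arXiv:2511.03887 — 3 statements merged into one kernel-verified Lean document; each statement's English description precedes it below -/
import Mathlib

section
/- For a topological group G, the following are equivalent: (1) G admits a geometry; (2) G is generated by an open, coarsely bounded subset; (3) G is generated by a coarsely bounded subset and has a coarsely bounded identity neighborhood. -/
open Pointwise

/-- A continuous, left-invariant pseudometric on a topological group `G`. -/
structure IsContLeftInvPseudometric (G : Type*) [Group G] [TopologicalSpace G]
    (d : G → G → ℝ) : Prop where
  continuous : Continuous fun p : G × G => d p.1 p.2
  self : ∀ x : G, d x x = 0
  symm : ∀ x y : G, d x y = d y x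
  nonneg : ∀ x y : G, 0 ≤ d x y
  triangle : ∀ x y z : G, d x z ≤ d x y + d y z
  left_inv : ∀ g x y : G, d (g * x) (g * y) = d x y

/-- A subset `A` of a topological group `G` is coarsely bounded in `G` if it has
finite diameter with respect to every continuous left-invariant pseudometric on `G`. -/
def IsCoarselyBounded (G : Type*) [Group G] [TopologicalSpace G] (A : Set G) : Prop :=
  ∀ d : G → G → ℝ, IsContLeftInvPseudometric G d →
    ∃ M : ℝ, ∀ a ∈ A, ∀ b ∈ A, d a b ≤ M

/-- The word length of `g` with respect to a generating set `S`: the least `n` such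
that `g` is a product of `n` elements of `S`. -/
noncomputable def wordLength {G : Type*} [Group G] (S : Set G) (g : G) : ℕ :=
  sInf {n : ℕ | ∃ l : List G, l.length = n ∧ (∀ s ∈ l, s ∈ S) ∧ l.prod = g}

/-- `G` admits a geometry if there is a continuous left-invariant pseudometric on `G`
which dominates, in the coarse Lipschitz sense, every continuous left-invariant
pseudometric on `G`. -/
def AdmitsAGeometry (G : Type*) [Group G] [TopologicalSpace G] : Prop :=
  ∃ d : G → G → ℝ, IsContLeftInvPseudometric G d ∧
    ∀ d' : G → G → ℝ, IsContLeftInvPseudometric G d' →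
      ∃ L K : ℝ, 0 < L ∧ 0 ≤ K ∧ ∀ g h : G, d' g h ≤ L * d g h + K

/-!
(1 ⇒ 2) For a maximal continuous left-invariant pseudometric `d`, the balls `{g | d 1 g < n + 1}`
generate an increasing sequence of open subgroups exhausting `G`. If none of them were all of `G`,
an ultrametric that is constant on the cosets of these subgroups, with values growing faster than
`d` along the sequence, would not be dominated by `d`. So some ball generates `G`, and balls are
coarsely bounded by maximality.

(2 ⇒ 3) A translate of an open coarsely bounded set is a coarsely bounded identity neighbourhood.

(3 ⇒ 1) Let `T` be the symmetrised union of the two sets. Every continuous left-invariant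
pseudometric is bounded by a multiple of the word length with respect to `T`, so it suffices to
find one that dominates the word metric coarsely. By Birkhoff–Kakutani there is a continuous
left-invariant `δ` whose ball of radius `1/2` lies in `T`. Take the largest pseudometric below the
cost "`δ` on steps in `T`, word length on the other steps". It is continuous because short steps
cost their `δ`-length. It dominates the word metric because a chain can be cut into blocks of
`δ`-length `< 1/2`, and each block stays within one step of `T`.
-/

open Filter Topology NNReal

structure IsLeftInvPseudometric (G : Type*) [Group G] (d : G → G → ℝ) : Prop where
  self : ∀ x : G, d x x = 0
  symm : ∀ x y : G, d x y = d y x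
  nonneg : ∀ x y : G, 0 ≤ d x y
  triangle : ∀ x y z : G, d x z ≤ d x y + d y z
  left_inv : ∀ g x y : G, d (g * x) (g * y) = d x y

section LeftInvariant

variable {G : Type*} [Group G] {d : G → G → ℝ}

theorem IsLeftInvPseudometric.eq_one_inv_mul (hd : IsLeftInvPseudometric G d) (x y : G) :
    d x y = d 1 (x⁻¹ * y) := by
  rw [← hd.left_inv x⁻¹, inv_mul_cancel]

theorem IsLeftInvPseudometric.isContLeftInvPseudometric [TopologicalSpace G]
    [IsTopologicalGroup G] (hd : IsLeftInvPseudometric G d)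
    (hsmall : ∀ ε > 0, ∀ᶠ g in 𝓝 (1 : G), d 1 g < ε) : IsContLeftInvPseudometric G d where
  continuous := by
    refine continuous_iff_continuousAt.2 fun q => Metric.tendsto_nhds.2 fun ε hε => ?_
    have hnear (x : G) : ∀ᶠ x' in 𝓝 x, d x x' < ε / 2 := by
      have : Tendsto (x⁻¹ * ·) (𝓝 x) (𝓝 1) := by
        simpa using (continuous_const_mul x⁻¹).tendsto x
      filter_upwards [this.eventually (hsmall _ (half_pos hε))] with x' hx'
      rwa [hd.eq_one_inv_mul]
    filter_upwards [(hnear q.1).prod_nhds (hnear q.2)] with p ⟨h₁, h₂⟩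
    rw [Real.dist_eq, abs_sub_lt_iff]
    constructor
    · linarith [hd.triangle p.1 q.1 p.2, hd.triangle q.1 q.2 p.2, hd.symm p.1 q.1]
    · linarith [hd.triangle q.1 p.1 q.2, hd.triangle p.1 p.2 q.2, hd.symm p.2 q.2]
  self := hd.self
  symm := hd.symm
  nonneg := hd.nonneg
  triangle := hd.triangle
  left_inv := hd.left_inv

end LeftInvariant

section ChainDist

variable {X : Type*}

/-- Read off without installing the instance, whose topology would clash with that of `G`. -/
noncomputable abbrev chainDist (c : X → X → ℝ≥0) (h₀ : ∀ x, c x x = 0)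
    (hc : ∀ x y, c x y = c y x) : X → X → ℝ :=
  @dist X (PseudoMetricSpace.ofPreNNDist c h₀ hc).toDist

variable {c : X → X → ℝ≥0} {h₀ : ∀ x, c x x = 0} {hc : ∀ x y, c x y = c y x}

theorem le_chainDist {x y : X} {r : ℝ}
    (h : ∀ l : List X, r ≤ ((x :: l).zipWith c (l ++ [y])).sum) : r ≤ chainDist c h₀ hc x y := by
  rw [chainDist, PseudoMetricSpace.dist_ofPreNNDist, NNReal.coe_iInf]
  exact le_ciInf h

theorem isLeftInvPseudometric_chainDist {G : Type*} [Group G] {c : G → G → ℝ≥0}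
    {h₀ : ∀ x, c x x = 0} {hc : ∀ x y, c x y = c y x} (hinv : ∀ g x y, c (g * x) (g * y) = c x y) :
    IsLeftInvPseudometric G (chainDist c h₀ hc) := by
  let _ := PseudoMetricSpace.ofPreNNDist c h₀ hc
  refine ⟨dist_self, dist_comm, fun _ _ => dist_nonneg, dist_triangle, fun g x y => ?_⟩
  simp only [chainDist, PseudoMetricSpace.dist_ofPreNNDist]
  congr 1
  rw [← (List.map_surjective_iff.2 (mul_left_surjective g)).iInf_comp]
  congr 1
  ext l
  rw [← List.map_cons, ← List.map_singleton, ← List.map_append, List.zipWith_map]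
  simp only [hinv]

end ChainDist

section BirkhoffKakutani

open scoped Classical

noncomputable def dyadicGauge {α : Type*} (V : ℕ → Set α) (a : α) : ℝ≥0 :=
  if h : ∃ n, a ∉ V n then 2⁻¹ ^ Nat.find h else 0

theorem two_inv_pow_le_dyadicGauge_iff {α : Type*} {V : ℕ → Set α} (hV : Antitone V) {a : α}
    {n : ℕ} : 2⁻¹ ^ n ≤ dyadicGauge V a ↔ a ∉ V n := by
  unfold dyadicGauge
  split_ifs with h
  · rw [(pow_right_strictAnti₀ (by norm_num) (by norm_num)).le_iff_ge, Nat.find_le_iff]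
    exact ⟨fun ⟨m, hmn, hm⟩ hn => hm (hV hmn hn), fun h => ⟨n, le_rfl, h⟩⟩
  · push Not at h
    simp [h]

variable {G : Type*} [Group G] {V : ℕ → Set G}

theorem dyadicGauge_one (hV : ∀ n, (1 : G) ∈ V n) : dyadicGauge V 1 = 0 :=
  dif_neg (by simpa using hV)

theorem dyadicGauge_inv (hV : ∀ n, (V n)⁻¹ = V n) (g : G) :
    dyadicGauge V g⁻¹ = dyadicGauge V g := by
  have h (n : ℕ) : g⁻¹ ∈ V n ↔ g ∈ V n := by rw [← Set.mem_inv, hV n]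
  by_cases hg : ∃ n, g ∉ V n
  · have hg' : ∃ n, g⁻¹ ∉ V n := by simpa only [h] using hg
    rw [dyadicGauge, dif_pos hg', dyadicGauge, dif_pos hg, Nat.find_congr' fun {n} => (h n).not]
  · rw [dyadicGauge, dif_neg (by simpa only [h] using hg), dyadicGauge, dif_neg hg]

theorem dyadicGauge_mul_mul_le (hV : Antitone V)
    (hV3 : ∀ n, V (n + 1) * V (n + 1) * V (n + 1) ⊆ V n) (a b c : G) :
    dyadicGauge V (a * b * c) ≤
      2 * max (dyadicGauge V a) (max (dyadicGauge V b) (dyadicGauge V c)) := by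
  by_cases h : ∃ n, a * b * c ∉ V n
  · have hsmall : 2⁻¹ ^ (Nat.find h + 1) ≤
        max (dyadicGauge V a) (max (dyadicGauge V b) (dyadicGauge V c)) := by
      by_contra! hlt
      simp only [max_lt_iff] at hlt
      simp only [lt_iff_not_ge, two_inv_pow_le_dyadicGauge_iff hV, not_not] at hlt
      exact Nat.find_spec h (hV3 _ (Set.mul_mem_mul (Set.mul_mem_mul hlt.1 hlt.2.1) hlt.2.2))
    calc dyadicGauge V (a * b * c) = 2 * 2⁻¹ ^ (Nat.find h + 1) := by
          rw [dyadicGauge, dif_pos h, pow_succ, mul_left_comm, mul_inv_cancel₀ two_ne_zero, mul_one]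
      _ ≤ _ := by gcongr
  · simp [dyadicGauge, dif_neg h]

variable [TopologicalSpace G] [IsTopologicalGroup G]

theorem exists_nhds_one_inv_eq_mul_mul_subset {W : Set G} (hW : W ∈ 𝓝 1) :
    ∃ V ∈ 𝓝 (1 : G), V⁻¹ = V ∧ V ⊆ W ∧ V * V * V ⊆ W := by
  obtain ⟨V₁, hV₁, -, -, hV₁W⟩ := exists_closed_nhds_one_inv_eq_mul_subset hW
  obtain ⟨V, hV, -, hVinv, hVV₁⟩ := exists_closed_nhds_one_inv_eq_mul_subset hV₁
  have one_mul_mem {U : Set G} (hU : U ∈ 𝓝 (1 : G)) {v : G} (hv : v ∈ U) : v ∈ U * U := by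
    simpa using Set.mul_mem_mul hv (mem_of_mem_nhds hU)
  have hV₁' : V ⊆ V₁ := fun v hv => hVV₁ (one_mul_mem hV hv)
  refine ⟨V, hV, hVinv, fun v hv => hV₁W (one_mul_mem hV₁ (hV₁' hv)), ?_⟩
  exact (Set.mul_subset_mul hVV₁ hV₁').trans hV₁W

theorem exists_seq_nhds_one_inv_eq_mul_mul_subset {T : Set G} (hT : T ∈ 𝓝 1) :
    ∃ V : ℕ → Set G, (∀ n, V n ∈ 𝓝 1) ∧ (∀ n, (V n)⁻¹ = V n) ∧ Antitone V ∧ V 0 ⊆ T ∧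
      ∀ n, V (n + 1) * V (n + 1) * V (n + 1) ⊆ V n := by
  have step (W : Set G) : ∃ V : Set G, W ∈ 𝓝 1 →
      V ∈ 𝓝 1 ∧ V⁻¹ = V ∧ V ⊆ W ∧ V * V * V ⊆ W := by
    by_cases hW : W ∈ 𝓝 1
    · obtain ⟨V, hV⟩ := exists_nhds_one_inv_eq_mul_mul_subset hW
      exact ⟨V, fun _ => hV⟩
    · exact ⟨W, fun h => absurd h hW⟩
  choose f hf using step
  set V : ℕ → Set G := fun n => f^[n + 1] T
  have hnext (n : ℕ) : V (n + 1) = f (V n) := Function.iterate_succ_apply' ..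
  have hmem (n : ℕ) : V n ∈ 𝓝 1 := by
    induction n with
    | zero => exact (hf T hT).1
    | succ n ih => rw [hnext]; exact (hf _ ih).1
  refine ⟨V, hmem, fun n => ?_, antitone_nat_of_succ_le fun n => ?_, (hf T hT).2.2.1, fun n => ?_⟩
  · cases n with
    | zero => exact (hf T hT).2.1
    | succ n => rw [hnext]; exact (hf _ (hmem n)).2.1
  · rw [hnext]; exact (hf _ (hmem n)).2.2.1
  · rw [hnext]; exact (hf _ (hmem n)).2.2.2

theorem exists_isContLeftInvPseudometric_ball_subset {T : Set G} (hT : T ∈ 𝓝 1) :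
    ∃ δ : G → G → ℝ, IsContLeftInvPseudometric G δ ∧ ∀ g, δ 1 g < 2⁻¹ → g ∈ T := by
  obtain ⟨V, hVnhds, hVinv, hVanti, hVT, hV3⟩ := exists_seq_nhds_one_inv_eq_mul_mul_subset hT
  set c : G → G → ℝ≥0 := fun x y => dyadicGauge V (x⁻¹ * y)
  have h₀ (x : G) : c x x = 0 := by
    simp [c, dyadicGauge_one fun n => mem_of_mem_nhds (hVnhds n)]
  have hc (x y : G) : c x y = c y x := by
    simp only [c]; rw [← dyadicGauge_inv hVinv, mul_inv_rev, inv_inv]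
  have hinv (g x y : G) : c (g * x) (g * y) = c x y := by
    simp only [c, mul_inv_rev, mul_assoc, inv_mul_cancel_left]
  have hkelley (x₁ x₂ x₃ x₄ : G) : c x₁ x₄ ≤ 2 * max (c x₁ x₂) (max (c x₂ x₃) (c x₃ x₄)) := by
    simpa [c, mul_assoc] using
      dyadicGauge_mul_mul_le hVanti hV3 (x₁⁻¹ * x₂) (x₂⁻¹ * x₃) (x₃⁻¹ * x₄)
  refine ⟨chainDist c h₀ hc,
    (isLeftInvPseudometric_chainDist hinv).isContLeftInvPseudometric fun ε hε => ?_,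
    fun g hg => hVT ?_⟩
  · obtain ⟨n, hn⟩ := exists_pow_lt_of_lt_one hε (by norm_num : (2⁻¹ : ℝ) < 1)
    filter_upwards [hVnhds n] with g hg
    have hgauge : dyadicGauge V g < 2⁻¹ ^ n :=
      not_le.1 ((two_inv_pow_le_dyadicGauge_iff hVanti).not.2 (not_not.2 hg))
    calc chainDist c h₀ hc 1 g ≤ c 1 g := PseudoMetricSpace.dist_ofPreNNDist_le c h₀ hc 1 g
      _ < 2⁻¹ ^ n := by simpa [c] using (NNReal.coe_lt_coe.2 hgauge)
      _ < ε := hn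
  · have h2 := PseudoMetricSpace.le_two_mul_dist_ofPreNNDist c h₀ hc hkelley 1 g
    have : dyadicGauge V g < 2⁻¹ ^ 0 := by
      rw [← NNReal.coe_lt_coe]; simp only [c, inv_one, one_mul] at h2; push_cast; linarith
    simpa using (two_inv_pow_le_dyadicGauge_iff hVanti).not.1 (not_le.2 this)

end BirkhoffKakutani

section Pseudometric

variable {G : Type*} [Group G] [TopologicalSpace G] {d : G → G → ℝ}

theorem IsContLeftInvPseudometric.isLeftInvPseudometric (hd : IsContLeftInvPseudometric G d) :
    IsLeftInvPseudometric G d :=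
  ⟨hd.self, hd.symm, hd.nonneg, hd.triangle, hd.left_inv⟩

theorem IsContLeftInvPseudometric.eq_one_inv_mul (hd : IsContLeftInvPseudometric G d) (x y : G) :
    d x y = d 1 (x⁻¹ * y) :=
  hd.isLeftInvPseudometric.eq_one_inv_mul x y

theorem IsContLeftInvPseudometric.one_inv (hd : IsContLeftInvPseudometric G d) (g : G) :
    d 1 g⁻¹ = d 1 g := by
  rw [← mul_one g⁻¹, ← hd.eq_one_inv_mul, hd.symm]

theorem IsContLeftInvPseudometric.one_mul_le (hd : IsContLeftInvPseudometric G d) (g h : G) :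
    d 1 (g * h) ≤ d 1 g + d 1 h := by
  simpa [hd.eq_one_inv_mul g] using hd.triangle 1 g (g * h)

theorem IsContLeftInvPseudometric.eventually_lt (hd : IsContLeftInvPseudometric G d) {ε : ℝ}
    (hε : 0 < ε) : ∀ᶠ g in 𝓝 (1 : G), d 1 g < ε := by
  have := (hd.continuous.comp (Continuous.prodMk_right (1 : G))).tendsto 1
  simp only [Function.comp_def, hd.self] at this
  exact this.eventually (Iio_mem_nhds hε)

end Pseudometric

section WordLength

variable {G : Type*} [Group G] {S : Set G}

theorem Subgroup.closure_toSubmonoid_of_inv_eq (hS : S⁻¹ = S) :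
    (closure S).toSubmonoid = Submonoid.closure S := by
  rw [closure_toSubmonoid, hS, Set.union_self]

theorem wordLength_prod_le {l : List G} (hl : ∀ s ∈ l, s ∈ S) : wordLength S l.prod ≤ l.length :=
  Nat.sInf_le ⟨l, rfl, hl, rfl⟩

theorem exists_list_length_eq_wordLength (hS : Submonoid.closure S = ⊤) (g : G) :
    ∃ l : List G, l.length = wordLength S g ∧ (∀ s ∈ l, s ∈ S) ∧ l.prod = g := by
  obtain ⟨l, hl, hlg⟩ := Submonoid.exists_list_of_mem_closure (hS ▸ Submonoid.mem_top g)
  exact Nat.sInf_mem (s := {n | ∃ l : List G, l.length = n ∧ (∀ s ∈ l, s ∈ S) ∧ l.prod = g})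
    ⟨l.length, l, rfl, hl, hlg⟩

theorem wordLength_le_one {g : G} (hg : g ∈ S) : wordLength S g ≤ 1 := by
  simpa using wordLength_prod_le (S := S) (l := [g]) (by simpa)

theorem wordLength_mul_le (hS : Submonoid.closure S = ⊤) (g h : G) :
    wordLength S (g * h) ≤ wordLength S g + wordLength S h := by
  obtain ⟨l₁, h₁, hl₁, rfl⟩ := exists_list_length_eq_wordLength hS g
  obtain ⟨l₂, h₂, hl₂, rfl⟩ := exists_list_length_eq_wordLength hS h
  rw [← h₁, ← h₂, ← List.length_append, ← List.prod_append]
  exact wordLength_prod_le (List.forall_mem_append.2 ⟨hl₁, hl₂⟩)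

theorem wordLength_inv_le (hS : Submonoid.closure S = ⊤) (hsymm : S⁻¹ = S) (g : G) :
    wordLength S g⁻¹ ≤ wordLength S g := by
  obtain ⟨l, hlen, hl, rfl⟩ := exists_list_length_eq_wordLength hS g
  rw [← hlen, List.prod_inv_reverse, ← List.length_map (·⁻¹), ← List.length_reverse]
  refine wordLength_prod_le fun s hs => ?_
  simp only [List.mem_reverse, List.mem_map] at hs
  obtain ⟨a, ha, rfl⟩ := hs
  rw [← hsymm]
  exact Set.inv_mem_inv.2 (hl a ha)

theorem wordLength_inv (hS : Submonoid.closure S = ⊤) (hsymm : S⁻¹ = S) (g : G) :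
    wordLength S g⁻¹ = wordLength S g :=
  le_antisymm (wordLength_inv_le hS hsymm g) (by simpa using wordLength_inv_le hS hsymm g⁻¹)

theorem wordLength_pos (hS : Submonoid.closure S = ⊤) {g : G} (hg : g ≠ 1) :
    0 < wordLength S g := by
  obtain ⟨l, hlen, -, rfl⟩ := exists_list_length_eq_wordLength hS g
  rw [← hlen, List.length_pos_iff]
  rintro rfl
  exact hg rfl

theorem IsContLeftInvPseudometric.le_mul_wordLength [TopologicalSpace G] {d : G → G → ℝ}
    (hd : IsContLeftInvPseudometric G d) (hS : Submonoid.closure S = ⊤) {M : ℝ}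
    (hM : ∀ s ∈ S, d 1 s ≤ M) (g : G) : d 1 g ≤ M * wordLength S g := by
  obtain ⟨l, hlen, hl, rfl⟩ := exists_list_length_eq_wordLength hS g
  rw [← hlen]
  clear hlen
  induction l with
  | nil => simp [hd.self]
  | cons s l ih =>
    rw [List.forall_mem_cons] at hl
    simp only [List.prod_cons, List.length_cons, Nat.cast_add, Nat.cast_one]
    linarith [hd.one_mul_le s l.prod, hM s hl.1, ih hl.2]

noncomputable def wordDist (S : Set G) (x y : G) : ℝ := wordLength S (x⁻¹ * y)

theorem wordDist_le_one {x y : G} (h : x⁻¹ * y ∈ S) : wordDist S x y ≤ 1 := by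
  simpa [wordDist] using wordLength_le_one h

theorem one_le_wordDist (hS : Submonoid.closure S = ⊤) {x y : G} (h : x⁻¹ * y ≠ 1) :
    1 ≤ wordDist S x y := by
  simpa [wordDist, Nat.one_le_iff_ne_zero] using (wordLength_pos hS h).ne'

theorem wordDist_triangle (hS : Submonoid.closure S = ⊤) (x y z : G) :
    wordDist S x z ≤ wordDist S x y + wordDist S y z := by
  have := wordLength_mul_le hS (x⁻¹ * y) (y⁻¹ * z)
  rw [mul_assoc, mul_inv_cancel_left] at this
  simp only [wordDist]
  exact_mod_cast this

end WordLength

section StepCost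

open scoped Classical

variable {G : Type*} [Group G] [TopologicalSpace G] {δ : G → G → ℝ} {T : Set G}

noncomputable def stepCost (δ : G → G → ℝ) (T : Set G) (x y : G) : ℝ≥0 :=
  if x⁻¹ * y ∈ T then (δ x y).toNNReal else wordLength T (x⁻¹ * y)

theorem coe_stepCost (hδ : IsContLeftInvPseudometric G δ) (x y : G) :
    (stepCost δ T x y : ℝ) = if x⁻¹ * y ∈ T then δ x y else wordDist T x y := by
  unfold stepCost
  split_ifs
  · exact Real.coe_toNNReal _ (hδ.nonneg x y)
  · simp [wordDist]

theorem dist_le_add_stepCost_or_wordDist_le (hδ : IsContLeftInvPseudometric G δ)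
    (hball : ∀ g, δ 1 g < 2⁻¹ → g ∈ T) (hT : Submonoid.closure T = ⊤) {x z a : G} {t : ℝ}
    (hzx : δ z x ≤ t) (ht : t < 2⁻¹) :
    (δ z a ≤ t + stepCost δ T x a ∧ t + stepCost δ T x a < 2⁻¹) ∨
      wordDist T z a ≤ 4 * (t + stepCost δ T x a) := by
  have hzx' : wordDist T z x ≤ 1 :=
    wordDist_le_one (hball _ (by rw [← hδ.eq_one_inv_mul]; linarith))
  have ht₀ : 0 ≤ t := (hδ.nonneg z x).trans hzx
  have htri := wordDist_triangle hT z x a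
  rw [coe_stepCost hδ]
  split_ifs with hxa
  · by_cases hsmall : t + δ x a < 2⁻¹
    · exact .inl ⟨(hδ.triangle z x a).trans (by linarith), hsmall⟩
    · exact .inr (by linarith [wordDist_le_one hxa])
  · have h1T : (1 : G) ∈ T := hball 1 (by simp [hδ.self])
    have := one_le_wordDist hT (ne_of_mem_of_not_mem h1T hxa).symm
    exact .inr (by linarith)

/-- The chain is cut greedily into blocks of `δ`-length `< 1/2`; `z` is the start of the current
block and `t` bounds its `δ`-length so far. -/
theorem wordDist_le_chain (hδ : IsContLeftInvPseudometric G δ)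
    (hball : ∀ g, δ 1 g < 2⁻¹ → g ∈ T) (hT : Submonoid.closure T = ⊤) (y : G) :
    ∀ (l : List G) (x z : G) (t : ℝ), δ z x ≤ t → t < 2⁻¹ →
      wordDist T z y ≤ 4 * (t + ((x :: l).zipWith (stepCost δ T) (l ++ [y])).sum) + 1
  | [], x, z, t, hzx, ht => by
    simp only [List.nil_append, List.zipWith_cons_cons, List.zipWith_nil_left, List.sum_cons,
      List.sum_nil, add_zero]
    rcases dist_le_add_stepCost_or_wordDist_le hδ hball hT (a := y) hzx ht with ⟨hzy, hlt⟩ | h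
    · have := wordDist_le_one (S := T) (x := z) (y := y)
        (hball _ (by rw [← hδ.eq_one_inv_mul]; linarith))
      linarith [(hδ.nonneg z x).trans hzx, (stepCost δ T x y).coe_nonneg]
    · linarith
  | a :: l, x, z, t, hzx, ht => by
    have hrest := wordDist_le_chain hδ hball hT y l a
    simp only [List.cons_append, List.zipWith_cons_cons, List.sum_cons, NNReal.coe_add] at hrest ⊢
    rcases dist_le_add_stepCost_or_wordDist_le hδ hball hT (a := a) hzx ht with ⟨hza, hlt⟩ | h
    · linarith [hrest z _ hza hlt]
    · linarith [hrest a 0 (by simp [hδ.self]) (by norm_num), wordDist_triangle hT z a y]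

theorem exists_isContLeftInvPseudometric_wordDist_le [IsTopologicalGroup G] (hT : T ∈ 𝓝 1)
    (hsymm : T⁻¹ = T) (hgen : Submonoid.closure T = ⊤) :
    ∃ d : G → G → ℝ, IsContLeftInvPseudometric G d ∧ ∀ x y, wordDist T x y ≤ 4 * d x y + 1 := by
  obtain ⟨δ, hδ, hball⟩ := exists_isContLeftInvPseudometric_ball_subset hT
  have h1T : (1 : G) ∈ T := mem_of_mem_nhds hT
  have h₀ (x : G) : stepCost δ T x x = 0 := by simp [stepCost, h1T, hδ.self]
  have hc (x y : G) : stepCost δ T x y = stepCost δ T y x := by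
    have hinv : y⁻¹ * x = (x⁻¹ * y)⁻¹ := by group
    have hmem : (x⁻¹ * y)⁻¹ ∈ T ↔ x⁻¹ * y ∈ T := by rw [← Set.mem_inv, hsymm]
    simp only [stepCost, hinv, hmem, wordLength_inv hgen hsymm, hδ.symm x y]
  have hinv (g x y : G) : stepCost δ T (g * x) (g * y) = stepCost δ T x y := by
    simp only [stepCost, mul_inv_rev, mul_assoc, inv_mul_cancel_left, hδ.left_inv]
  refine ⟨chainDist (stepCost δ T) h₀ hc,
    (isLeftInvPseudometric_chainDist hinv).isContLeftInvPseudometric fun ε hε => ?_,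
    fun x y => ?_⟩
  · filter_upwards [hT, hδ.eventually_lt hε] with g hgT hg
    calc chainDist (stepCost δ T) h₀ hc 1 g ≤ stepCost δ T 1 g :=
          PseudoMetricSpace.dist_ofPreNNDist_le _ h₀ hc 1 g
      _ = δ 1 g := by rw [coe_stepCost hδ, if_pos (by simpa using hgT)]
      _ < ε := hg
  · have : (wordDist T x y - 1) / 4 ≤ chainDist (stepCost δ T) h₀ hc x y :=
      le_chainDist fun l => by
        have := wordDist_le_chain hδ hball hgen y l x x 0 (by simp [hδ.self])
          (by norm_num)
        linarith
    linarith

end StepCost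

section CoarselyBounded

variable {G : Type*} [Group G] [TopologicalSpace G] {A : Set G}

theorem IsCoarselyBounded.exists_le (hA : IsCoarselyBounded G A) {d : G → G → ℝ}
    (hd : IsContLeftInvPseudometric G d) : ∃ M, ∀ a ∈ A, d 1 a ≤ M := by
  obtain ⟨M, hM⟩ := hA d hd
  rcases A.eq_empty_or_nonempty with rfl | ⟨a₀, ha₀⟩
  · exact ⟨0, by simp⟩
  · exact ⟨d 1 a₀ + M, fun a ha => (hd.triangle 1 a₀ a).trans (by linarith [hM a₀ ha₀ a ha])⟩

theorem IsCoarselyBounded.smul_set (hA : IsCoarselyBounded G A) (g : G) :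
    IsCoarselyBounded G (g • A) := by
  intro d hd
  obtain ⟨M, hM⟩ := hA d hd
  refine ⟨M, ?_⟩
  rintro _ ⟨a, ha, rfl⟩ _ ⟨b, hb, rfl⟩
  simpa [hd.left_inv] using hM a ha b hb

theorem isCoarselyBounded_of_subsingleton [Subsingleton G] (A : Set G) : IsCoarselyBounded G A :=
  fun d hd => ⟨0, fun a _ b _ => by rw [Subsingleton.elim a b, hd.self]⟩

variable [IsTopologicalGroup G]

theorem IsOpen.exists_mem_nhds_isCoarselyBounded {S : Set G} (hSo : IsOpen S)
    (hS : IsCoarselyBounded G S) (hgen : Subgroup.closure S = ⊤) :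
    ∃ U ∈ 𝓝 (1 : G), IsCoarselyBounded G U := by
  rcases S.eq_empty_or_nonempty with rfl | ⟨s, hs⟩
  · have : Subsingleton G := by
      rw [Subgroup.closure_empty] at hgen
      exact Subgroup.subsingleton_iff.1 (subsingleton_of_bot_eq_top hgen)
    exact ⟨Set.univ, Filter.univ_mem, isCoarselyBounded_of_subsingleton _⟩
  · refine ⟨s⁻¹ • S, (hSo.smul s⁻¹).mem_nhds ?_, hS.smul_set s⁻¹⟩
    simpa using Set.smul_mem_smul_set (a := s⁻¹) hs

theorem admitsAGeometry_of_isCoarselyBounded {S U : Set G} (hS : IsCoarselyBounded G S)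
    (hgen : Subgroup.closure S = ⊤) (hU : U ∈ 𝓝 1) (hUb : IsCoarselyBounded G U) :
    AdmitsAGeometry G := by
  set T := (S ∪ U) ∪ (S ∪ U)⁻¹
  have hT : T ∈ 𝓝 1 :=
    Filter.mem_of_superset hU (Set.subset_union_right.trans Set.subset_union_left)
  have hsymm : T⁻¹ = T := by simp only [T, Set.union_inv, inv_inv, Set.union_comm (S⁻¹ ∪ U⁻¹)]
  have hgenT : Submonoid.closure T = ⊤ := by
    have : Subgroup.closure T = ⊤ :=
      top_unique (hgen ▸ Subgroup.closure_mono (Set.subset_union_left.trans Set.subset_union_left))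
    rw [← Subgroup.closure_toSubmonoid_of_inv_eq hsymm, this, Subgroup.top_toSubmonoid]
  obtain ⟨d, hd, hword⟩ := exists_isContLeftInvPseudometric_wordDist_le hT hsymm hgenT
  refine ⟨d, hd, fun d' hd' => ?_⟩
  obtain ⟨MS, hMS⟩ := hS.exists_le hd'
  obtain ⟨MU, hMU⟩ := hUb.exists_le hd'
  have hMA : ∀ a ∈ S ∪ U, d' 1 a ≤ max MS MU := by
    rintro a (ha | ha)
    exacts [le_max_of_le_left (hMS a ha), le_max_of_le_right (hMU a ha)]
  have hMT : ∀ t ∈ T, d' 1 t ≤ max MS MU := by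
    rintro t (ht | ht)
    exacts [hMA t ht, hd'.one_inv t ▸ hMA _ ht]
  set M := max MS MU
  have hM : 0 ≤ M := hd'.self 1 ▸ hMT 1 (mem_of_mem_nhds hT)
  refine ⟨4 * M + 1, M, by positivity, hM, fun x y => ?_⟩
  calc d' x y = d' 1 (x⁻¹ * y) := hd'.eq_one_inv_mul x y
    _ ≤ M * wordDist T x y := hd'.le_mul_wordLength hgenT hMT _
    _ ≤ M * (4 * d x y + 1) := mul_le_mul_of_nonneg_left (hword x y) hM
    _ ≤ (4 * M + 1) * d x y + M := by nlinarith [hd.nonneg x y]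

end CoarselyBounded

section Filtration

variable {G : Type*} [Group G] {H : ℕ → Subgroup G}

noncomputable def filtrationIndex (H : ℕ → Subgroup G) (g : G) : ℕ := sInf {n | g ∈ H n}

theorem filtrationIndex_le_iff (hmono : Monotone H) (hcover : ∀ g, ∃ n, g ∈ H n) {g : G}
    {n : ℕ} : filtrationIndex H g ≤ n ↔ g ∈ H n :=
  ⟨fun h => hmono h (Nat.sInf_mem (hcover g)), fun h => Nat.sInf_le h⟩

variable [TopologicalSpace G] [IsTopologicalGroup G]

theorem isContLeftInvPseudometric_filtrationIndex (hmono : Monotone H)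
    (hcover : ∀ g, ∃ n, g ∈ H n) (hopen : (H 0 : Set G) ∈ 𝓝 1) {p : ℕ → ℝ} (hp : Monotone p)
    (hp0 : p 0 = 0) : IsContLeftInvPseudometric G fun x y => p (filtrationIndex H (x⁻¹ * y)) := by
  have hle {g : G} {n : ℕ} := filtrationIndex_le_iff hmono hcover (g := g) (n := n)
  have hzero {g : G} (hg : g ∈ H 0) : p (filtrationIndex H g) = 0 := by
    rw [Nat.le_zero.1 (hle.2 hg), hp0]
  have hnonneg (n : ℕ) : 0 ≤ p n := hp0 ▸ hp n.zero_le
  refine IsLeftInvPseudometric.isContLeftInvPseudometric ⟨fun x => ?_, fun x y => ?_,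
    fun x y => hnonneg _, fun x y z => ?_, fun g x y => ?_⟩ fun ε hε => ?_
  · simpa using hzero (one_mem _)
  · refine congrArg p (eq_of_forall_ge_iff fun n => ?_)
    rw [hle, hle, ← inv_mem_iff, mul_inv_rev, inv_inv]
  · set m := max (filtrationIndex H (x⁻¹ * y)) (filtrationIndex H (y⁻¹ * z))
    have hxz : x⁻¹ * z ∈ H m := by
      simpa using mul_mem (hle.1 (le_max_left _ _ : filtrationIndex H (x⁻¹ * y) ≤ m))
        (hle.1 (le_max_right _ _ : filtrationIndex H (y⁻¹ * z) ≤ m))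
    calc p (filtrationIndex H (x⁻¹ * z)) ≤ p m := hp (hle.2 hxz)
      _ = max (p _) (p _) := hp.map_max
      _ ≤ _ := max_le_add_of_nonneg (hnonneg _) (hnonneg _)
  · simp only [mul_inv_rev, mul_assoc, inv_mul_cancel_left]
  · filter_upwards [hopen] with g hg
    simpa [hzero hg] using hε

theorem AdmitsAGeometry.exists_eq_top (hG : AdmitsAGeometry G) (hmono : Monotone H)
    (hcover : ∀ g, ∃ n, g ∈ H n) (hopen : (H 0 : Set G) ∈ 𝓝 1) : ∃ n, H n = ⊤ := by
  obtain ⟨d, hd, hmax⟩ := hG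
  by_contra! hne
  have hout (n : ℕ) : ∃ g, g ∉ H n := by simpa [Subgroup.eq_top_iff'] using hne n
  choose g hg using hout
  -- `p` is built so that the ultrametric below exceeds `(k + 1) * (d 1 (g k) + 1)` at `g k`.
  set q : ℕ → ℝ := fun k => (k + 1) * (d 1 (g k) + 1)
  have hq (k : ℕ) : 0 ≤ q k := mul_nonneg (by positivity) (by linarith [hd.nonneg 1 (g k)])
  set p : ℕ → ℝ := fun n => ∑ k ∈ Finset.range n, q k
  have hp : Monotone p := fun m n hmn =>
    Finset.sum_le_sum_of_subset_of_nonneg (Finset.range_subset_range.2 hmn) fun k _ _ => hq k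
  obtain ⟨L, K, -, -, hLK⟩ :=
    hmax _ (isContLeftInvPseudometric_filtrationIndex hmono hcover hopen hp (by simp [p]))
  obtain ⟨k, hk⟩ := exists_nat_gt (max L K)
  have hidx : k + 1 ≤ filtrationIndex H (g k) := by
    by_contra! h
    exact hg k ((filtrationIndex_le_iff hmono hcover).1 (Nat.lt_succ_iff.1 h))
  have hqk : q k ≤ p (filtrationIndex H (g k)) :=
    (Finset.single_le_sum (fun j _ => hq j) (Finset.self_mem_range_succ k)).trans (hp hidx)
  have hbound := hLK 1 (g k)
  simp only [inv_one, one_mul] at hbound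
  nlinarith [hd.nonneg 1 (g k), le_max_left L K, le_max_right L K]

theorem AdmitsAGeometry.exists_isOpen_isCoarselyBounded_closure_eq_top (hG : AdmitsAGeometry G) :
    ∃ S : Set G, IsOpen S ∧ IsCoarselyBounded G S ∧ Subgroup.closure S = ⊤ := by
  obtain ⟨d, hd, hmax⟩ := id hG
  set B : ℕ → Set G := fun n => {g | d 1 g < n + 1}
  have hBmono : Monotone B := fun m n hmn g (hg : d 1 g < m + 1) =>
    show d 1 g < n + 1 by linarith [(Nat.cast_le (α := ℝ)).2 hmn]
  obtain ⟨n, hn⟩ := hG.exists_eq_top (H := fun n => Subgroup.closure (B n))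
    (fun m n hmn => Subgroup.closure_mono (hBmono hmn))
    (fun g => ⟨⌈d 1 g⌉₊,
      Subgroup.subset_closure (show d 1 g < _ by linarith [Nat.le_ceil (d 1 g)])⟩)
    (Filter.mem_of_superset (hd.eventually_lt one_pos) fun g hg =>
      Subgroup.subset_closure (show d 1 g < (0 : ℕ) + 1 by simpa using hg))
  refine ⟨B n, isOpen_lt (hd.continuous.comp (Continuous.prodMk_right 1)) continuous_const,
    fun d' hd' => ?_, hn⟩
  obtain ⟨L, K, hL, -, hLK⟩ := hmax d' hd'
  refine ⟨L * (2 * (n + 1)) + K, fun a (ha : d 1 a < n + 1) b (hb : d 1 b < n + 1) => ?_⟩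
  have hab : d a b ≤ 2 * (n + 1) := by
    linarith [hd.triangle a 1 b, hd.symm a 1]
  exact (hLK a b).trans (by gcongr)

end Filtration

/-- Characterization of admitting a geometry: `G` admits a geometry iff `G` is
generated by an open coarsely bounded set iff `G` is generated by a coarsely bounded
set and is locally bounded. -/
theorem admitsAGeometry_tfae {G : Type*} [Group G] [TopologicalSpace G]
    [IsTopologicalGroup G] :
    List.TFAE
      [AdmitsAGeometry G,
       ∃ S : Set G, IsOpen S ∧ IsCoarselyBounded G S ∧ Subgroup.closure S = ⊤,
       (∃ S : Set G, IsCoarselyBounded G S ∧ Subgroup.closure S = ⊤) ∧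
         ∃ U : Set G, U ∈ nhds (1 : G) ∧ IsCoarselyBounded G U] := by
  tfae_have 1 → 2 := AdmitsAGeometry.exists_isOpen_isCoarselyBounded_closure_eq_top
  tfae_have 2 → 3 := fun ⟨S, hSo, hS, hgen⟩ =>
    ⟨⟨S, hS, hgen⟩, hSo.exists_mem_nhds_isCoarselyBounded hS hgen⟩
  tfae_have 3 → 1 := fun ⟨⟨_, hS, hgen⟩, _, hU, hUb⟩ =>
    admitsAGeometry_of_isCoarselyBounded hS hgen hU hUb
  tfae_finish
end

section
/- Let G be a topological group whose underlying topological space is a Baire space, and suppose G is generated by a coarsely bounded subset S ⊆ G. Then G is locally bounded: G has an identity neighborhood that is coarsely bounded in G. -/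
open Pointwise

/-!
Coarse boundedness is stable under inverses, finite unions, products, powers, closures and left
translates, so with `T = S ∪ S⁻¹` every power `Tⁿ` and its closure are coarsely bounded. Since `S`
generates `G`, the closed sets `closure (Tⁿ)` cover `G`; by the Baire property one of them has
nonempty interior, and a left translate of it is then a coarsely bounded identity neighbourhood.
-/

open Topology

theorem Submonoid.exists_mem_pow_of_mem_closure {M : Type*} [Monoid M] {T : Set M} {g : M}
    (hg : g ∈ Submonoid.closure T) : ∃ n : ℕ, g ∈ T ^ n := by
  induction hg using Submonoid.closure_induction with
  | mem x hx => exact ⟨1, by rwa [pow_one]⟩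
  | one => exact ⟨0, by rw [pow_zero]; rfl⟩
  | mul x y _ _ hx hy =>
    obtain ⟨m, hxm⟩ := hx
    obtain ⟨n, hyn⟩ := hy
    exact ⟨m + n, by rw [pow_add]; exact Set.mul_mem_mul hxm hyn⟩

theorem Subgroup.exists_mem_pow_of_closure_eq_top {G : Type*} [Group G] {S : Set G}
    (hS : Subgroup.closure S = ⊤) (g : G) : ∃ n : ℕ, g ∈ (S ∪ S⁻¹) ^ n := by
  apply Submonoid.exists_mem_pow_of_mem_closure
  rw [← Subgroup.closure_toSubmonoid, hS]
  trivial

theorem exists_smul_closure_mem_nhds_one {G : Type*} [Group G] [TopologicalSpace G]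
    [IsTopologicalGroup G] [BaireSpace G] {A : ℕ → Set G} (hA : ∀ g : G, ∃ n, g ∈ A n) :
    ∃ n, ∃ x : G, x • closure (A n) ∈ 𝓝 1 := by
  have hcover : ⋃ n, closure (A n) = Set.univ :=
    Set.eq_univ_of_forall fun g ↦
      let ⟨n, hn⟩ := hA g
      Set.mem_iUnion.2 ⟨n, subset_closure hn⟩
  obtain ⟨n, x, hx⟩ := nonempty_interior_of_iUnion_of_closed (fun _ ↦ isClosed_closure) hcover
  refine ⟨n, x⁻¹, ?_⟩
  rw [← inv_mul_cancel x, ← smul_eq_mul, smul_mem_nhds_smul_iff]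
  exact mem_interior_iff_mem_nhds.1 hx

namespace IsContLeftInvPseudometric

variable {G : Type*} [Group G] [TopologicalSpace G] {d : G → G → ℝ}

theorem dist_eq_dist_one_inv_mul (hd : IsContLeftInvPseudometric G d) (a b : G) :
    d a b = d 1 (a⁻¹ * b) := by
  rw [← hd.left_inv a⁻¹, inv_mul_cancel]

theorem dist_one_inv (hd : IsContLeftInvPseudometric G d) (g : G) : d 1 g⁻¹ = d 1 g := by
  rw [hd.symm, hd.dist_eq_dist_one_inv_mul, inv_inv, mul_one]

theorem dist_le_dist_one_add (hd : IsContLeftInvPseudometric G d) (a b : G) :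
    d a b ≤ d 1 a + d 1 b :=
  (hd.triangle a 1 b).trans_eq (by rw [hd.symm a])

theorem dist_one_mul_le (hd : IsContLeftInvPseudometric G d) (a b : G) :
    d 1 (a * b) ≤ d 1 a + d 1 b :=
  (hd.triangle 1 a (a * b)).trans_eq (by rw [hd.dist_eq_dist_one_inv_mul a, inv_mul_cancel_left])

theorem continuous_dist_one (hd : IsContLeftInvPseudometric G d) : Continuous (d 1) :=
  hd.continuous.comp (continuous_const.prodMk continuous_id)

end IsContLeftInvPseudometric

namespace IsCoarselyBounded

variable {G : Type*} [Group G] [TopologicalSpace G] {A B : Set G}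

theorem _root_.isCoarselyBounded_iff_forall_dist_one_le :
    IsCoarselyBounded G A ↔
      ∀ d, IsContLeftInvPseudometric G d → ∃ M : ℝ, ∀ a ∈ A, d 1 a ≤ M := by
  refine ⟨fun hA d hd ↦ ?_, fun hA d hd ↦ ?_⟩
  · obtain ⟨M, hM⟩ := hA d hd
    rcases A.eq_empty_or_nonempty with rfl | ⟨a₀, ha₀⟩
    · exact ⟨0, by simp⟩
    exact ⟨d 1 a₀ + M, fun a ha ↦ (hd.triangle 1 a₀ a).trans (by gcongr; exact hM a₀ ha₀ a ha)⟩
  · obtain ⟨M, hM⟩ := hA d hd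
    exact ⟨M + M, fun a ha b hb ↦
      (hd.dist_le_dist_one_add a b).trans (add_le_add (hM a ha) (hM b hb))⟩

theorem mono (hB : IsCoarselyBounded G B) (hAB : A ⊆ B) : IsCoarselyBounded G A := fun d hd ↦
  let ⟨M, hM⟩ := hB d hd
  ⟨M, fun a ha b hb ↦ hM a (hAB ha) b (hAB hb)⟩

theorem smul (hA : IsCoarselyBounded G A) (x : G) : IsCoarselyBounded G (x • A) := by
  intro d hd
  obtain ⟨M, hM⟩ := hA d hd
  refine ⟨M, ?_⟩
  rintro _ ⟨a, ha, rfl⟩ _ ⟨b, hb, rfl⟩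
  simpa only [smul_eq_mul, hd.left_inv] using hM a ha b hb

theorem one : IsCoarselyBounded G 1 :=
  isCoarselyBounded_iff_forall_dist_one_le.2 fun d hd ↦
    ⟨0, fun a ha ↦ by rw [Set.mem_one.1 ha, hd.self]⟩

theorem inv (hA : IsCoarselyBounded G A) : IsCoarselyBounded G A⁻¹ := by
  rw [isCoarselyBounded_iff_forall_dist_one_le] at hA ⊢
  intro d hd
  obtain ⟨M, hM⟩ := hA d hd
  exact ⟨M, fun a ha ↦ hd.dist_one_inv a ▸ hM a⁻¹ ha⟩

theorem union (hA : IsCoarselyBounded G A) (hB : IsCoarselyBounded G B) :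
    IsCoarselyBounded G (A ∪ B) := by
  rw [isCoarselyBounded_iff_forall_dist_one_le] at hA hB ⊢
  intro d hd
  obtain ⟨M, hM⟩ := hA d hd
  obtain ⟨N, hN⟩ := hB d hd
  refine ⟨max M N, ?_⟩
  rintro a (ha | ha)
  · exact (hM a ha).trans (le_max_left M N)
  · exact (hN a ha).trans (le_max_right M N)

theorem mul (hA : IsCoarselyBounded G A) (hB : IsCoarselyBounded G B) :
    IsCoarselyBounded G (A * B) := by
  rw [isCoarselyBounded_iff_forall_dist_one_le] at hA hB ⊢
  intro d hd
  obtain ⟨M, hM⟩ := hA d hd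
  obtain ⟨N, hN⟩ := hB d hd
  refine ⟨M + N, ?_⟩
  rintro _ ⟨a, ha, b, hb, rfl⟩
  exact (hd.dist_one_mul_le a b).trans (add_le_add (hM a ha) (hN b hb))

theorem pow (hA : IsCoarselyBounded G A) (n : ℕ) : IsCoarselyBounded G (A ^ n) := by
  induction n with
  | zero => rw [pow_zero]; exact one
  | succ n ih => rw [pow_succ]; exact ih.mul hA

theorem closure (hA : IsCoarselyBounded G A) : IsCoarselyBounded G (closure A) := by
  rw [isCoarselyBounded_iff_forall_dist_one_le] at hA ⊢
  intro d hd
  obtain ⟨M, hM⟩ := hA d hd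
  exact ⟨M, fun a ha ↦ closure_minimal hM (isClosed_le hd.continuous_dist_one continuous_const) ha⟩

end IsCoarselyBounded

/-- A Baire topological group generated by a coarsely bounded set is locally
bounded. -/
theorem locallyBounded_of_baire_cb_generated {G : Type*} [Group G] [TopologicalSpace G]
    [IsTopologicalGroup G] [BaireSpace G]
    (S : Set G) (hS : IsCoarselyBounded G S) (hgen : Subgroup.closure S = ⊤) :
    ∃ U : Set G, U ∈ nhds (1 : G) ∧ IsCoarselyBounded G U := by
  obtain ⟨n, x, hU⟩ :=
    exists_smul_closure_mem_nhds_one (Subgroup.exists_mem_pow_of_closure_eq_top hgen)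
  exact ⟨_, hU, ((hS.union hS.inv).pow n).closure.smul x⟩
end

section
/- Let (G_i)_{i ∈ I} be a family of topological groups and let G = ∏_{i ∈ I} G_i with the product topology. Then G is coarsely bounded in itself (i.e., the set G is a coarsely bounded subset of G) if and only if every G_i is coarsely bounded in itself. -/
open Pointwise

open Topology

/-! Pulling a continuous left-invariant pseudometric back along a continuous homomorphism gives
another one. Applied to the projections this gives the forward direction; applied to the
inclusions `Pi.mulSingle i`, it bounds `d 1` on each factor by some `M i`, for a pseudometric `d`
on the product. The `d`-ball of radius one about `1` is a neighbourhood of `1`, so it contains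
every `g` that is trivial on some finite set `F` of coordinates. Splitting an arbitrary `g` into
its restriction to `F`, a product of `|F|` elements of factors, and the rest, which lies in that
ball, gives `d 1 g ≤ ∑ i ∈ F, M i + 1`. -/

namespace IsContLeftInvPseudometric

variable {G : Type*} [Group G] [TopologicalSpace G] {d : G → G → ℝ}

theorem comp_monoidHom {H : Type*} [Group H] [TopologicalSpace H]
    (hd : IsContLeftInvPseudometric G d) (f : H →* G) (hf : Continuous f) :
    IsContLeftInvPseudometric H (fun x y => d (f x) (f y)) where
  continuous := hd.continuous.comp ((hf.comp continuous_fst).prodMk (hf.comp continuous_snd))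
  self _ := hd.self _
  symm _ _ := hd.symm _ _
  nonneg _ _ := hd.nonneg _ _
  triangle _ _ _ := hd.triangle _ _ _
  left_inv g x y := by simp only [map_mul, hd.left_inv]

theorem dist_le_of_forall_dist_one_le (hd : IsContLeftInvPseudometric G d) {M : ℝ}
    (hM : ∀ g, d 1 g ≤ M) (a b : G) : d a b ≤ M :=
  hd.dist_eq_dist_one_inv_mul a b ▸ hM _

end IsContLeftInvPseudometric

theorem IsCoarselyBounded.image {G H : Type*} [Group G] [TopologicalSpace G] [Group H]
    [TopologicalSpace H] {A : Set G} (hA : IsCoarselyBounded G A) (f : G →* H)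
    (hf : Continuous f) : IsCoarselyBounded H (f '' A) := by
  intro d hd
  obtain ⟨M, hM⟩ := hA _ (hd.comp_monoidHom f hf)
  exact ⟨M, by rintro _ ⟨a, ha, rfl⟩ _ ⟨b, hb, rfl⟩; exact hM a ha b hb⟩

theorem Pi.exists_finset_of_mem_nhds {I : Type*} {X : I → Type*} [∀ i, TopologicalSpace (X i)]
    {x : ∀ i, X i} {U : Set (∀ i, X i)} (hU : U ∈ 𝓝 x) :
    ∃ F : Finset I, ∀ g : ∀ i, X i, (∀ i ∈ F, g i = x i) → g ∈ U := by
  rw [nhds_pi, Filter.mem_pi'] at hU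
  obtain ⟨F, t, ht, hsub⟩ := hU
  exact ⟨F, fun g hg => hsub fun i hi => hg i hi ▸ mem_of_mem_nhds (ht i)⟩

section Pi

variable {I : Type*} {Gf : I → Type*} [∀ i, Group (Gf i)] [∀ i, TopologicalSpace (Gf i)]

theorem IsContLeftInvPseudometric.dist_one_le_sum_of_eq_one_of_notMem [DecidableEq I]
    {d : (∀ i, Gf i) → (∀ i, Gf i) → ℝ} (hd : IsContLeftInvPseudometric (∀ i, Gf i) d)
    {M : I → ℝ} (hM : ∀ i (a : Gf i), d 1 (Pi.mulSingle i a) ≤ M i) (s : Finset I)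
    {g : ∀ i, Gf i} (hg : ∀ i ∉ s, g i = 1) : d 1 g ≤ ∑ i ∈ s, M i := by
  induction s using Finset.induction_on generalizing g with
  | empty =>
    rw [show g = 1 from funext fun i => hg i (Finset.notMem_empty i), hd.self,
      Finset.sum_empty]
  | insert a s ha ih =>
    have hsplit : g = Pi.mulSingle a (g a) * Function.update g a 1 := by
      funext i
      rcases eq_or_ne i a with rfl | hia <;> simp [*]
    have hrest : ∀ i ∉ s, Function.update g a 1 i = 1 := by
      intro i hi
      rcases eq_or_ne i a with rfl | hia
      · exact Function.update_self _ _ _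
      · rw [Function.update_of_ne hia]
        exact hg i (by simp [hia, hi])
    calc d 1 g = d 1 (Pi.mulSingle a (g a) * Function.update g a 1) := congrArg _ hsplit
      _ ≤ d 1 (Pi.mulSingle a (g a)) + d 1 (Function.update g a 1) := hd.dist_one_mul_le _ _
      _ ≤ M a + ∑ i ∈ s, M i := add_le_add (hM a _) (ih hrest)
      _ = ∑ i ∈ insert a s, M i := (Finset.sum_insert ha).symm

theorem isCoarselyBounded_univ_pi (h : ∀ i, IsCoarselyBounded (Gf i) Set.univ) :
    IsCoarselyBounded (∀ i, Gf i) Set.univ := by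
  classical
  intro d hd
  have hfactor : ∀ i, ∃ M : ℝ, ∀ a : Gf i, d 1 (Pi.mulSingle i a) ≤ M := by
    intro i
    obtain ⟨M, hM⟩ := (h i).image (MonoidHom.mulSingle Gf i) (continuous_mulSingle i) d hd
    exact ⟨M, fun a => hM 1 ⟨1, trivial, Pi.mulSingle_one i⟩ _ ⟨a, trivial, rfl⟩⟩
  choose M hM using hfactor
  have hball : {g : ∀ i, Gf i | d 1 g < 1} ∈ 𝓝 1 :=
    (hd.continuous.comp (continuous_const.prodMk continuous_id)).continuousAt.preimage_mem_nhds
      (Iio_mem_nhds (by simp [hd.self]))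
  obtain ⟨F, hF⟩ := Pi.exists_finset_of_mem_nhds hball
  refine ⟨∑ i ∈ F, M i + 1, fun a _ b _ => hd.dist_le_of_forall_dist_one_le (fun g => ?_) a b⟩
  set p : ∀ i, Gf i := F.piecewise g 1
  set q : ∀ i, Gf i := F.piecewise 1 g
  have hsplit : g = p * q := by
    funext i
    by_cases hi : i ∈ F <;> simp [p, q, hi]
  calc d 1 g = d 1 (p * q) := congrArg _ hsplit
    _ ≤ d 1 p + d 1 q := hd.dist_one_mul_le _ _
    _ ≤ ∑ i ∈ F, M i + 1 := by
        gcongr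
        · exact hd.dist_one_le_sum_of_eq_one_of_notMem hM F
            fun i hi => Finset.piecewise_eq_of_notMem _ _ _ hi
        · exact (hF _ fun i hi => Finset.piecewise_eq_of_mem _ _ _ hi).le

end Pi

theorem pi_isCoarselyBounded_univ_iff_general {I : Type*} (Gf : I → Type*)
    [∀ i, Group (Gf i)] [∀ i, TopologicalSpace (Gf i)] :
    IsCoarselyBounded (∀ i, Gf i) Set.univ ↔
      ∀ i, IsCoarselyBounded (Gf i) Set.univ := by
  refine ⟨fun h i => ?_, isCoarselyBounded_univ_pi⟩
  rw [← Set.image_univ_of_surjective (Function.surjective_eval i)]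
  exact h.image (Pi.evalMonoidHom Gf i) (continuous_apply i)

/-- A product of topological groups is coarsely bounded in itself if and only if
every factor is coarsely bounded in itself. -/
theorem pi_isCoarselyBounded_univ_iff {I : Type*} (Gf : I → Type*)
    [∀ i, Group (Gf i)] [∀ i, TopologicalSpace (Gf i)] [∀ i, IsTopologicalGroup (Gf i)] :
    IsCoarselyBounded (∀ i, Gf i) Set.univ ↔
      ∀ i, IsCoarselyBounded (Gf i) Set.univ :=
  pi_isCoarselyBounded_univ_iff_general Gf
end
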